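/- Let S be a distributive inverse semigroup. If a ∈ S and X_a = ⋃_{i ∈ I} X_{a_i} for a family of elements a_i ∈ S (where X_s is the set of prime filters containing s), then there is a finite subset J ⊆ I with X_a = ⋃_{j ∈ J} X_{a_j}. That is, each basic open set X_a is compact in the topology generated by the X_s. -/

import Mathlib

namespace InvPaper

/-- An inverse semigroup: a regular semigroup whose idempotents commute
(equivalently, each element has a unique generalized inverse `sinv`). -/
class InverseSemigroup (S : Type*) extends Semigroup S where
  sinv : S → S
  mul_sinv_mul : ∀ a : S, a * sinv a * a = a
  sinv_mul_sinv : ∀ a : S, sinv a * a * sinv a = sinv a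
  idem_comm : ∀ e f : S, e * e = e → f * f = f → e * f = f * e

open InverseSemigroup

variable {S : Type*}

section Basic
variable [InverseSemigroup S]

/-- `e` is an idempotent. -/
def idem (e : S) : Prop := e * e = e

/-- The natural partial order: `a ≤ b` iff `a = b * e` for some idempotent `e`. -/
def nle (a b : S) : Prop := ∃ e : S, idem e ∧ a = b * e

/-- `s` and `t` are compatible: `s⁻¹t` and `st⁻¹` are idempotents. -/
def compatible (s t : S) : Prop := idem (sinv s * t) ∧ idem (s * sinv t)

/-- `j` is the join (least upper bound) of `a` and `b` w.r.t. the natural partial order. -/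
def isJoin (a b j : S) : Prop :=
  nle a j ∧ nle b j ∧ ∀ c : S, nle a c → nle b c → nle j c

/-- `m` is the meet (greatest lower bound) of `a` and `b`. -/
def isMeet (a b m : S) : Prop :=
  nle m a ∧ nle m b ∧ ∀ z : S, nle z a → nle z b → nle z m

/-- `j` is the least upper bound of the set `A`. -/
def isJoinSet (A : Set S) (j : S) : Prop :=
  (∀ a ∈ A, nle a j) ∧ ∀ c : S, (∀ a ∈ A, nle a c) → nle j c

/-- A filter: a nonempty, downward-directed, upward-closed subset. -/
def IsFilter (F : Set S) : Prop :=
  F.Nonempty ∧ (∀ a ∈ F, ∀ b ∈ F, ∃ c ∈ F, nle c a ∧ nle c b) ∧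
    ∀ a ∈ F, ∀ b : S, nle a b → b ∈ F

/-- An order ideal: a downward-closed subset. -/
def IsOrderIdeal (A : Set S) : Prop := ∀ x ∈ A, ∀ y : S, nle y x → y ∈ A

end Basic

/-- An inverse semigroup with a (multiplicative) zero element. -/
class InverseSemigroupWithZero (S : Type*) extends InverseSemigroup S, Zero S where
  zmul : ∀ a : S, 0 * a = 0
  mulz : ∀ a : S, a * 0 = 0

section WithZero
variable [InverseSemigroupWithZero S]

/-- A proper filter: a filter not containing `0`. -/
def IsProperFilter (F : Set S) : Prop := IsFilter F ∧ (0 : S) ∉ F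

/-- An ultrafilter: a maximal proper filter. -/
def IsUltrafilter (F : Set S) : Prop :=
  IsProperFilter F ∧ ∀ G : Set S, IsProperFilter G → F ⊆ G → G = F

/-- A prime filter: a proper filter `F` such that whenever a join `a ∨ b` exists and
lies in `F`, then `a ∈ F` or `b ∈ F`. -/
def IsPrimeFilter (F : Set S) : Prop :=
  IsProperFilter F ∧ ∀ a b j : S, isJoin a b j → j ∈ F → a ∈ F ∨ b ∈ F

/-- `d(F) = (F⁻¹F)↑`, the upward closure of `{a⁻¹b : a, b ∈ F}`. -/
def dClosure (F : Set S) : Set S :=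
  {x | ∃ a ∈ F, ∃ b ∈ F, nle (InverseSemigroup.sinv a * b) x}

/-- `r(F) = (FF⁻¹)↑`, the upward closure of `{ab⁻¹ : a, b ∈ F}`. -/
def rClosure (F : Set S) : Set S :=
  {x | ∃ a ∈ F, ∃ b ∈ F, nle (a * InverseSemigroup.sinv b) x}

/-- The product of two filters: `F · G = (FG)↑`. -/
def filterMul (F G : Set S) : Set S :=
  {x | ∃ a ∈ F, ∃ b ∈ G, nle (a * b) x}

/-- `A` is ∨-closed: closed under existing joins of finite nonempty compatible subsets. -/
def IsVeeClosed (A : Set S) : Prop :=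
  ∀ Y : Finset S, Y.Nonempty → ↑Y ⊆ A → (∀ a ∈ Y, ∀ b ∈ Y, compatible a b) →
    ∀ j : S, isJoinSet (↑Y : Set S) j → j ∈ A

/-- The ∨-closure `A^∨`: all existing joins of finite nonempty compatible subsets of `A`. -/
def veeClosure (A : Set S) : Set S :=
  {x | ∃ Y : Finset S, Y.Nonempty ∧ ↑Y ⊆ A ∧ (∀ a ∈ Y, ∀ b ∈ Y, compatible a b) ∧
    isJoinSet (↑Y : Set S) x}

/-- A prime order ideal: if every common lower bound of `a` and `b` lies in `P`,
then `a ∈ P` or `b ∈ P`. -/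
def IsPrimeOrderIdeal (P : Set S) : Prop :=
  ∀ a b : S, (∀ z : S, nle z a → nle z b → z ∈ P) → a ∈ P ∨ b ∈ P

/-- The set of prime filters containing `s`. -/
def Xset (s : S) : Set (Set S) := {F | IsPrimeFilter F ∧ s ∈ F}

end WithZero

/-- A distributive inverse semigroup: compatible pairs have joins and
multiplication distributes over these joins. -/
class DistributiveInverseSemigroup (S : Type*) extends InverseSemigroupWithZero S where
  joins_exist : ∀ a b : S, compatible a b → ∃ j : S, isJoin a b j
  mul_distrib_left : ∀ a b j c : S, compatible a b → isJoin a b j →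
    isJoin (c * a) (c * b) (c * j)
  mul_distrib_right : ∀ a b j c : S, compatible a b → isJoin a b j →
    isJoin (a * c) (b * c) (j * c)

/-- A distributive inverse semigroup is Boolean if its idempotents form a generalized
Boolean algebra: relative complements of idempotents exist. -/
def IsBoolean (S : Type*) [DistributiveInverseSemigroup S] : Prop :=
  ∀ e f : S, idem e → idem f → nle e f →
    ∃ g : S, idem g ∧ e * g = 0 ∧ isJoin e g f

/-- A pseudogroup: an inverse semigroup with joins of all nonempty compatible subsets,
over which multiplication distributes. -/
class Pseudogroup (S : Type*) extends InverseSemigroup S where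
  joins_exist : ∀ A : Set S, A.Nonempty → (∀ a ∈ A, ∀ b ∈ A, compatible a b) →
    ∃ j : S, isJoinSet A j
  mul_distrib_left : ∀ (A : Set S) (j c : S), isJoinSet A j →
    isJoinSet ((c * ·) '' A) (c * j)
  mul_distrib_right : ∀ (A : Set S) (j c : S), isJoinSet A j →
    isJoinSet ((· * c) '' A) (j * c)

/-!
Let `A` be the smallest order ideal that contains `0` and all `a_i` and is closed under binary
joins. If `a ∈ A`, then `a` is obtained by finitely many joins from elements below finitely many
`a_i`; since prime filters are upward closed and split joins, those `X_{a_i}` already cover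
`X_a`. If `a ∉ A`, a filter containing `a` that is maximal among the filters disjoint from `A`
(Zorn) is prime, by distributivity; it lies in `X_a` but in no `X_{a_i}`, contradicting the cover.
-/

section InverseSemigroup
variable [InverseSemigroup S]

theorem idem_sinv_mul_self (a : S) : idem (sinv a * a) := by
  show sinv a * a * (sinv a * a) = sinv a * a
  rw [← mul_assoc, sinv_mul_sinv]

theorem idem_mul_sinv_self (a : S) : idem (a * sinv a) := by
  show a * sinv a * (a * sinv a) = a * sinv a
  rw [← mul_assoc, mul_sinv_mul]

theorem idem.mul {e f : S} (he : idem e) (hf : idem f) : idem (e * f) := by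
  show e * f * (e * f) = e * f
  calc e * f * (e * f) = e * (f * e) * f := by simp only [mul_assoc]
    _ = e * e * (f * f) := by rw [idem_comm f e hf he]; simp only [mul_assoc]
    _ = e * f := by rw [he, hf]

theorem nle_refl (a : S) : nle a a :=
  ⟨sinv a * a, idem_sinv_mul_self a, by rw [← mul_assoc, mul_sinv_mul]⟩

theorem nle.trans {a b c : S} (hab : nle a b) (hbc : nle b c) : nle a c := by
  obtain ⟨e, he, rfl⟩ := hab
  obtain ⟨g, hg, rfl⟩ := hbc
  exact ⟨g * e, hg.mul he, mul_assoc c g e⟩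

theorem mul_idem_nle_self (x : S) {e : S} (he : idem e) : nle (x * e) x := ⟨e, he, rfl⟩

theorem nle.mul_idem {x y e : S} (h : nle x y) (he : idem e) : nle (x * e) (y * e) := by
  obtain ⟨g, hg, rfl⟩ := h
  exact ⟨g, hg, by rw [mul_assoc, mul_assoc, idem_comm g e hg he]⟩

theorem eq_sinv_of_inverse {a x : S} (h₁ : a * x * a = a) (h₂ : x * a * x = x) :
    x = sinv a := by
  have hax : idem (a * x) := by
    show a * x * (a * x) = a * x
    rw [← mul_assoc, h₁]
  have hxa : idem (x * a) := by
    show x * a * (x * a) = x * a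
    rw [← mul_assoc, h₂]
  have hx : x = x * a * sinv a :=
    calc x = x * (a * sinv a * a) * x := by rw [mul_sinv_mul, h₂]
      _ = x * ((a * sinv a) * (a * x)) := by simp only [mul_assoc]
      _ = x * ((a * x) * (a * sinv a)) := by rw [idem_comm _ _ (idem_mul_sinv_self a) hax]
      _ = x * a * x * a * sinv a := by simp only [mul_assoc]
      _ = x * a * sinv a := by rw [h₂]
  have hy : sinv a = x * a * sinv a :=
    calc sinv a = sinv a * (a * x * a) * sinv a := by rw [h₁, sinv_mul_sinv]
      _ = (sinv a * a) * (x * a) * sinv a := by simp only [mul_assoc]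
      _ = (x * a) * (sinv a * a) * sinv a := by rw [idem_comm _ _ (idem_sinv_mul_self a) hxa]
      _ = x * a * (sinv a * a * sinv a) := by simp only [mul_assoc]
      _ = x * a * sinv a := by rw [sinv_mul_sinv]
  exact hx.trans hy.symm

theorem sinv_eq_self_of_idem {e : S} (he : idem e) : sinv e = e :=
  (eq_sinv_of_inverse (by rw [he, he]) (by rw [he, he])).symm

theorem sinv_mul (a b : S) : sinv (a * b) = sinv b * sinv a := by
  refine (eq_sinv_of_inverse ?_ ?_).symm
  · calc (a * b) * (sinv b * sinv a) * (a * b)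
        = a * ((b * sinv b) * (sinv a * a)) * b := by simp only [mul_assoc]
      _ = a * ((sinv a * a) * (b * sinv b)) * b := by
        rw [idem_comm _ _ (idem_mul_sinv_self b) (idem_sinv_mul_self a)]
      _ = (a * sinv a * a) * (b * sinv b * b) := by simp only [mul_assoc]
      _ = a * b := by rw [mul_sinv_mul, mul_sinv_mul]
  · calc (sinv b * sinv a) * (a * b) * (sinv b * sinv a)
        = sinv b * ((sinv a * a) * (b * sinv b)) * sinv a := by simp only [mul_assoc]
      _ = sinv b * ((b * sinv b) * (sinv a * a)) * sinv a := by
        rw [idem_comm _ _ (idem_sinv_mul_self a) (idem_mul_sinv_self b)]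
      _ = (sinv b * b * sinv b) * (sinv a * a * sinv a) := by simp only [mul_assoc]
      _ = sinv b * sinv a := by rw [sinv_mul_sinv, sinv_mul_sinv]

theorem idem.conj {g : S} (hg : idem g) (a : S) : idem (a * g * sinv a) := by
  show (a * g * sinv a) * (a * g * sinv a) = a * g * sinv a
  calc (a * g * sinv a) * (a * g * sinv a)
      = a * (g * (sinv a * a)) * (g * sinv a) := by simp only [mul_assoc]
    _ = a * ((sinv a * a) * g) * (g * sinv a) := by
        rw [idem_comm g (sinv a * a) hg (idem_sinv_mul_self a)]
    _ = (a * sinv a * a) * (g * g * sinv a) := by simp only [mul_assoc]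
    _ = a * g * sinv a := by rw [mul_sinv_mul, hg, mul_assoc]

theorem compatible_of_nle_of_nle {x y a : S} (hx : nle x a) (hy : nle y a) :
    compatible x y := by
  obtain ⟨e, he, rfl⟩ := hx
  obtain ⟨g, hg, rfl⟩ := hy
  constructor
  · have h : sinv (a * e) * (a * g) = e * (sinv a * a) * g := by
      rw [sinv_mul, sinv_eq_self_of_idem he]; simp only [mul_assoc]
    rw [h]
    exact (he.mul (idem_sinv_mul_self a)).mul hg
  · have h : (a * e) * sinv (a * g) = a * (e * g) * sinv a := by
      rw [sinv_mul, sinv_eq_self_of_idem hg]; simp only [mul_assoc]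
    rw [h]
    exact (he.mul hg).conj a

theorem isFilter_principal (a : S) : IsFilter {x | nle a x} :=
  ⟨⟨a, nle_refl a⟩, fun _ hb _ hc => ⟨a, nle_refl a, hb, hc⟩, fun _ hb _ hbc => hb.trans hbc⟩

theorem isFilter_sUnion {c : Set (Set S)} (hc : ∀ F ∈ c, IsFilter F)
    (hchain : IsChain (· ⊆ ·) c) (hne : c.Nonempty) : IsFilter (⋃₀ c) := by
  refine ⟨?_, ?_, ?_⟩
  · obtain ⟨F, hF⟩ := hne
    obtain ⟨x, hx⟩ := (hc F hF).1
    exact ⟨x, F, hF, hx⟩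
  · rintro x ⟨F₁, hF₁, hx⟩ y ⟨F₂, hF₂, hy⟩
    rcases hchain.total hF₁ hF₂ with h₁₂ | h₂₁
    · obtain ⟨z, hz, hzx, hzy⟩ := (hc F₂ hF₂).2.1 x (h₁₂ hx) y hy
      exact ⟨z, ⟨F₂, hF₂, hz⟩, hzx, hzy⟩
    · obtain ⟨z, hz, hzx, hzy⟩ := (hc F₁ hF₁).2.1 x hx y (h₂₁ hy)
      exact ⟨z, ⟨F₁, hF₁, hz⟩, hzx, hzy⟩
  · rintro x ⟨F, hF, hx⟩ y hxy
    exact ⟨F, hF, (hc F hF).2.2 x hx y hxy⟩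

theorem exists_maximal_filter_disjoint {A : Set S} (hA : IsOrderIdeal A) {a : S} (ha : a ∉ A) :
    ∃ M, Maximal (fun F => IsFilter F ∧ a ∈ F ∧ Disjoint F A) M := by
  have hprincipal : Disjoint {x | nle a x} A :=
    Set.disjoint_left.2 fun x hx hxA => ha (hA x hxA a hx)
  have hchains : ∀ c ⊆ {F : Set S | IsFilter F ∧ a ∈ F ∧ Disjoint F A}, IsChain (· ⊆ ·) c →
      c.Nonempty → ∃ M ∈ {F : Set S | IsFilter F ∧ a ∈ F ∧ Disjoint F A}, ∀ F ∈ c, F ⊆ M := by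
    intro c hc hchain hne
    obtain ⟨F, hF⟩ := hne
    exact ⟨⋃₀ c, ⟨isFilter_sUnion (fun F hF => (hc hF).1) hchain ⟨F, hF⟩,
      ⟨F, hF, (hc hF).2.1⟩, Set.disjoint_sUnion_left.2 fun F hF => (hc hF).2.2⟩,
      fun F hF => Set.subset_sUnion_of_mem hF⟩
  obtain ⟨M, -, hM⟩ := zorn_subset_nonempty _ hchains _
    ⟨isFilter_principal a, nle_refl a, hprincipal⟩
  exact ⟨M, hM⟩

end InverseSemigroup

section WithZero
variable [InverseSemigroupWithZero S]

theorem mem_filterMul_singleton {M : Set S} {e w : S} :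
    w ∈ filterMul M {e} ↔ ∃ v ∈ M, nle (v * e) w := by
  simp [filterMul]

theorem subset_filterMul_idem (M : Set S) {e : S} (he : idem e) : M ⊆ filterMul M {e} :=
  fun v hv => mem_filterMul_singleton.2 ⟨v, hv, mul_idem_nle_self v he⟩

theorem IsFilter.filterMul_idem {M : Set S} (hM : IsFilter M) {e : S} (he : idem e) :
    IsFilter (filterMul M {e}) := by
  refine ⟨hM.1.mono (subset_filterMul_idem M he), fun w₁ hw₁ w₂ hw₂ => ?_, fun w hw b hwb => ?_⟩
  · obtain ⟨v₁, hv₁, h₁⟩ := mem_filterMul_singleton.1 hw₁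
    obtain ⟨v₂, hv₂, h₂⟩ := mem_filterMul_singleton.1 hw₂
    obtain ⟨v, hv, hvv₁, hvv₂⟩ := hM.2.1 v₁ hv₁ v₂ hv₂
    exact ⟨v * e, mem_filterMul_singleton.2 ⟨v, hv, nle_refl _⟩, (hvv₁.mul_idem he).trans h₁,
      (hvv₂.mul_idem he).trans h₂⟩
  · obtain ⟨v, hv, hw⟩ := mem_filterMul_singleton.1 hw
    exact mem_filterMul_singleton.2 ⟨v, hv, hw.trans hwb⟩

/-- If `j e ∉ M`, the filter `(M e)↑`, which contains `M` and `j e`, must meet `A`. -/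
theorem exists_mul_idem_mem_of_maximal {A : Set S} (hA : IsOrderIdeal A) {a : S} {M : Set S}
    (hM : Maximal (fun F => IsFilter F ∧ a ∈ F ∧ Disjoint F A) M) {j e : S} (hj : j ∈ M)
    (he : idem e) (hje : j * e ∉ M) : ∃ v ∈ M, v * e ∈ A := by
  by_contra! hMe
  have hsub := subset_filterMul_idem M he
  have hdisj : Disjoint (filterMul M {e}) A :=
    Set.disjoint_left.2 fun w hw hwA => by
      obtain ⟨v, hv, hvw⟩ := mem_filterMul_singleton.1 hw
      exact hMe v hv (hA w hwA _ hvw)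
  exact hje (hM.2 ⟨hM.1.1.filterMul_idem he, hsub hM.1.2.1, hdisj⟩ hsub
    (mem_filterMul_singleton.2 ⟨j, hj, nle_refl _⟩))

theorem eq_zero_of_nle_zero {z : S} (h : nle z 0) : z = 0 := by
  obtain ⟨e, -, rfl⟩ := h
  exact InverseSemigroupWithZero.zmul e

theorem Xset_mono {x y : S} (h : nle x y) : Xset x ⊆ Xset y :=
  fun _ ⟨hF, hx⟩ => ⟨hF, hF.1.1.2.2 x hx y h⟩

theorem Xset_subset_union_of_isJoin {x y j : S} (h : isJoin x y j) :
    Xset j ⊆ Xset x ∪ Xset y :=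
  fun _ ⟨hF, hj⟩ => (hF.2 x y j h hj).imp (fun hx => ⟨hF, hx⟩) (fun hy => ⟨hF, hy⟩)

theorem Xset_zero : Xset (0 : S) = ∅ :=
  Set.eq_empty_of_forall_notMem fun _ ⟨hF, h0⟩ => hF.1.2 h0

inductive JoinIdeal {I : Type*} (f : I → S) : S → Prop
  | zero : JoinIdeal f 0
  | of_nle (i : I) {x : S} : nle x (f i) → JoinIdeal f x
  | join {x y j : S} : JoinIdeal f x → JoinIdeal f y → isJoin x y j → JoinIdeal f j

theorem JoinIdeal.exists_finset_Xset_subset {I : Type*} {f : I → S} {x : S}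
    (h : JoinIdeal f x) : ∃ J : Finset I, Xset x ⊆ ⋃ i ∈ J, Xset (f i) := by
  classical
  induction h with
  | zero => exact ⟨∅, by simp [Xset_zero]⟩
  | of_nle i hx => exact ⟨{i}, by simpa using Xset_mono hx⟩
  | join _ _ hj ihx ihy =>
    obtain ⟨J₁, hJ₁⟩ := ihx
    obtain ⟨J₂, hJ₂⟩ := ihy
    refine ⟨J₁ ∪ J₂, (Xset_subset_union_of_isJoin hj).trans ?_⟩
    rw [Finset.set_biUnion_union]
    exact Set.union_subset_union hJ₁ hJ₂

end WithZero

section Distributive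
variable [DistributiveInverseSemigroup S]

theorem isJoin.mul_right {x y j : S} (h : isJoin x y j) (c : S) :
    isJoin (x * c) (y * c) (j * c) :=
  DistributiveInverseSemigroup.mul_distrib_right x y j c (compatible_of_nle_of_nle h.1 h.2.1) h

theorem JoinIdeal.isOrderIdeal {I : Type*} {f : I → S} : IsOrderIdeal {x | JoinIdeal f x} := by
  intro x hx
  induction hx with
  | zero => exact fun z hz => eq_zero_of_nle_zero hz ▸ .zero
  | of_nle i hx => exact fun z hz => .of_nle i (hz.trans hx)
  | join _ _ hj ihx ihy =>
    rintro _ ⟨c, hc, rfl⟩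
    exact .join (ihx _ (mul_idem_nle_self _ hc)) (ihy _ (mul_idem_nle_self _ hc)) (hj.mul_right c)

theorem isPrimeFilter_of_maximal {A : Set S} (hA : IsOrderIdeal A)
    (hjoin : ∀ x y j, isJoin x y j → x ∈ A → y ∈ A → j ∈ A) (h0 : (0 : S) ∈ A) {a : S}
    {M : Set S} (hM : Maximal (fun F => IsFilter F ∧ a ∈ F ∧ Disjoint F A) M) :
    IsPrimeFilter M := by
  obtain ⟨hMF, -, hMA⟩ := hM.1
  refine ⟨⟨hMF, fun hM0 => Set.disjoint_left.1 hMA hM0 h0⟩, fun x y j hxyj hj => ?_⟩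
  obtain ⟨e, he, rfl⟩ := hxyj.1
  obtain ⟨e', he', rfl⟩ := hxyj.2.1
  by_contra! hxy
  obtain ⟨v₁, hv₁, hv₁A⟩ := exists_mul_idem_mem_of_maximal hA hM hj he hxy.1
  obtain ⟨v₂, hv₂, hv₂A⟩ := exists_mul_idem_mem_of_maximal hA hM hj he' hxy.2
  obtain ⟨v, hv, hvv₁, hvv₂⟩ := hMF.2.1 v₁ hv₁ v₂ hv₂
  obtain ⟨_, hw, hwv, c, hc, rfl⟩ := hMF.2.1 v hv j hj
  -- `j c ∈ M` is the join of `j e c = (j c) e` and `j e' c = (j c) e'`, both of which lie in `A`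
  have hxc : j * e * c ∈ A := by
    rw [mul_assoc, idem_comm e c he hc, ← mul_assoc]
    exact hA _ hv₁A _ ((hwv.trans hvv₁).mul_idem he)
  have hyc : j * e' * c ∈ A := by
    rw [mul_assoc, idem_comm e' c he' hc, ← mul_assoc]
    exact hA _ hv₂A _ ((hwv.trans hvv₂).mul_idem he')
  exact Set.disjoint_left.1 hMA hw (hjoin _ _ _ (hxyj.mul_right c) hxc hyc)

theorem exists_isPrimeFilter_disjoint {A : Set S} (hA : IsOrderIdeal A)
    (hjoin : ∀ x y j, isJoin x y j → x ∈ A → y ∈ A → j ∈ A) (h0 : (0 : S) ∈ A) {a : S}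
    (ha : a ∉ A) : ∃ F, IsPrimeFilter F ∧ a ∈ F ∧ Disjoint F A := by
  obtain ⟨M, hM⟩ := exists_maximal_filter_disjoint hA ha
  exact ⟨M, isPrimeFilter_of_maximal hA hjoin h0 hM, hM.1.2.1, hM.1.2.2⟩

end Distributive

/-- Each basic open set `X_a` is compact: any cover of `X_a` by sets
`X_{a_i}` has a finite subcover. -/
theorem stmt16 {S : Type*} [DistributiveInverseSemigroup S] {I : Type*}
    (a : S) (f : I → S) (h : Xset a = ⋃ i : I, Xset (f i)) :
    ∃ J : Finset I, Xset a = ⋃ j ∈ J, Xset (f j) := by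
  by_cases ha : JoinIdeal f a
  · obtain ⟨J, hJ⟩ := ha.exists_finset_Xset_subset
    refine ⟨J, hJ.antisymm ?_⟩
    rw [h]
    exact Set.iUnion₂_subset fun i _ => Set.subset_iUnion (fun i => Xset (f i)) i
  · obtain ⟨F, hF, haF, hFA⟩ := exists_isPrimeFilter_disjoint JoinIdeal.isOrderIdeal
      (fun _ _ _ hj hx hy => .join hx hy hj) .zero ha
    have hF' : F ∈ ⋃ i, Xset (f i) := h ▸ ⟨hF, haF⟩
    obtain ⟨i, -, hfi⟩ := Set.mem_iUnion.1 hF'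
    exact absurd (.of_nle i (nle_refl (f i))) (Set.disjoint_left.1 hFA hfi)

end InvPaper
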